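/- arXiv:2004.00504 — 2 statements merged into one kernel-verified Lean document; each statement's English description precedes it below -/
import Mathlib

section
/- Let q be a positive integer and let m, n be integers with gcd(mn, q) = 1. Then Σ*_{χ (mod q)} χ(m) χ̄(n) = Σ_{d | q, d | m−n} φ(d) μ(q/d), where the right-hand sum runs over positive divisors d of q which also divide m−n, φ is Euler's totient function and μ is the Möbius function. -/
open Complex Finset
open scoped Real

noncomputable section

namespace Paper

/-- the number of primitive Dirichlet characters modulo `q` -/
def phiStar (q : ℕ) : ℕ := Nat.card {χ : DirichletCharacter ℂ q // χ.IsPrimitive}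

/-- the complex conjugate of a Dirichlet character -/
def conjChar {q : ℕ} (χ : DirichletCharacter ℂ q) : DirichletCharacter ℂ q :=
  χ.ringHomComp (starRingEnd ℂ)

/-- `∏_{p ∣ q} (1 - p⁻¹)³ / (1 + p⁻¹)` -/
def localFactor (q : ℕ) : ℝ := ∏ p ∈ q.primeFactors, ((1 - (p : ℝ)⁻¹) ^ 3 / (1 + (p : ℝ)⁻¹))

/-- `q* = ∏_{p ∣ q} p` -/
def qStar (q : ℕ) : ℕ := ∏ p ∈ q.primeFactors, p

/-- `q₀ = max { d : d ∣ q*, d < (q*)^{1/2} }` -/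
def q0 (q : ℕ) : ℕ := Nat.findGreatest (fun d => d ∣ qStar q ∧ d * d < qStar q) (qStar q)

/-- `ζ_q(s) = ζ(s) ∏_{p ∣ q} (1 - p^{-s})` -/
def zetaq (q : ℕ) (s : ℂ) : ℂ := riemannZeta s * ∏ p ∈ q.primeFactors, (1 - (p : ℂ) ^ (-s))

/-- `Z_q(α,β,γ,δ)` -/
def Zq (q : ℕ) (α β γ δ : ℂ) : ℂ :=
  zetaq q (1 + α + γ) * zetaq q (1 + α + δ) * zetaq q (1 + β + γ) * zetaq q (1 + β + δ) /
    zetaq q (2 + α + β + γ + δ)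

/-- `Z(α,β,γ,δ)` (the case `q = 1`) -/
def Zfun (α β γ δ : ℂ) : ℂ := Zq 1 α β γ δ

/-- `X_{α,γ}(q,t,𝔞)` -/
def Xg (q : ℕ) (α γ : ℂ) (t : ℝ) (a : ℕ) : ℂ :=
  ((q : ℂ) / (Real.pi : ℂ)) ^ (-(α + γ)) *
    (Complex.Gamma ((1/2 - α - I*t + a)/2) / Complex.Gamma ((1/2 + α + I*t + a)/2)) *
    (Complex.Gamma ((1/2 - γ + I*t + a)/2) / Complex.Gamma ((1/2 + γ - I*t + a)/2))

/-- `X_{α,β,γ,δ}(q,t,𝔞)` -/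
def X4 (q : ℕ) (α β γ δ : ℂ) (t : ℝ) (a : ℕ) : ℂ := Xg q α γ t a * Xg q β δ t a

/-- `g_{α,β,γ,δ}(s,t,𝔞)` -/
def gg (α β γ δ : ℂ) (s : ℂ) (t : ℝ) (a : ℕ) : ℂ :=
  (Real.pi : ℂ) ^ (-2*s) *
    (Complex.Gamma ((1/2 + α + s + I*t + a)/2) * Complex.Gamma ((1/2 + β + s + I*t + a)/2) *
     Complex.Gamma ((1/2 + γ + s - I*t + a)/2) * Complex.Gamma ((1/2 + δ + s - I*t + a)/2)) /
    (Complex.Gamma ((1/2 + α + I*t + a)/2) * Complex.Gamma ((1/2 + β + I*t + a)/2) *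
     Complex.Gamma ((1/2 + γ - I*t + a)/2) * Complex.Gamma ((1/2 + δ - I*t + a)/2))

/-- the integral `∫_{(c)} f(s) ds` over the vertical line `Re s = c` -/
def vint (c : ℝ) (f : ℂ → ℂ) : ℂ := I * ∫ y : ℝ, f (c + y * I)

/-- `V_{α,β,γ,δ}(x,t,𝔞)` -/
def Vg (G : ℂ → ℂ) (α β γ δ : ℂ) (x : ℝ) (t : ℝ) (a : ℕ) : ℂ :=
  (2 * Real.pi * I)⁻¹ * vint 1 (fun s => G s / s * gg α β γ δ s t a * (x : ℂ) ^ (-s))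

/-- `Ṽ_{α,β,γ,δ}(x,t,𝔞) = X_{-γ,-δ,-α,-β}(q,t,𝔞) V_{α,β,γ,δ}(x,t,𝔞)` -/
def Vt (G : ℂ → ℂ) (q : ℕ) (α β γ δ : ℂ) (x : ℝ) (t : ℝ) (a : ℕ) : ℂ :=
  X4 q (-γ) (-δ) (-α) (-β) t a * Vg G α β γ δ x t a

/-- `σ_{α,β}(n) = ∑_{d₁ d₂ = n} d₁^{-α} d₂^{-β}` -/
def sigmaS (α β : ℂ) (n : ℕ) : ℂ :=
  ∑ d ∈ n.divisors, (d : ℂ) ^ (-α) * ((n / d : ℕ) : ℂ) ^ (-β)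

/-- the digamma function `ψ = Γ'/Γ` -/
def psi (z : ℂ) : ℂ := deriv Complex.Gamma z / Complex.Gamma z

/-- the Möbius function, as an integer -/
def moeb (n : ℕ) : ℤ := ArithmeticFunction.moebius n

/-- `G` decays rapidly in every fixed vertical strip -/
def RapidDecay (G : ℂ → ℂ) : Prop :=
  ∀ C > (0:ℝ), ∀ A > (0:ℝ), ∃ K : ℝ, ∀ s : ℂ, |s.re| ≤ C → ‖G s‖ ≤ K * (1 + |s.im|) ^ (-A)

/-- the standing hypotheses on the weight function `Φ`:  smooth, nonnegative, supported in
`[T/2, 4T]`, with `Φ^{(j)} ≪_j T₀^{-j}` -/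
def PhiHyp (Φ : ℝ → ℝ) (T T₀ : ℝ) (CΦ : ℕ → ℝ) : Prop :=
  ContDiff ℝ (⊤ : ℕ∞) Φ ∧ (∀ t, 0 ≤ Φ t) ∧ (∀ t, Φ t ≠ 0 → t ∈ Set.Icc (T/2) (4*T)) ∧
    ∀ j : ℕ, ∀ t : ℝ, |iteratedDeriv j Φ t| ≤ CΦ j * T₀ ^ (-(j:ℝ))

/-- the shifted moment `M(α,β,γ,δ,t)` -/
def Mshift (q : ℕ) [NeZero q] (α β γ δ : ℂ) (t : ℝ) : ℂ :=
  (phiStar q : ℂ)⁻¹ * ∑' χ : {χ : DirichletCharacter ℂ q // χ.IsPrimitive},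
    DirichletCharacter.LFunction χ.1 (1/2 + I*t + α) *
    DirichletCharacter.LFunction χ.1 (1/2 + I*t + β) *
    DirichletCharacter.LFunction (conjChar χ.1) (1/2 - I*t + γ) *
    DirichletCharacter.LFunction (conjChar χ.1) (1/2 - I*t + δ)

end Paper

namespace Paper

/-- `(1/φ*(q)) ∑*_{χ mod q} ∫_{T₁}^{T₂} |L(1/2+it,χ)|⁴ dt` -/
noncomputable def fourthMomentIntegral (q : ℕ) [NeZero q] (T₁ T₂ : ℝ) : ℝ :=
  (phiStar q : ℝ)⁻¹ * ∑' χ : {χ : DirichletCharacter ℂ q // χ.IsPrimitive},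
    ∫ t in T₁..T₂, ‖DirichletCharacter.LFunction χ.1 (1/2 + I*t)‖ ^ 4

/-- `(1/φ*(q)) ∑*_{χ mod q} |L(1/2+it,χ)|⁴` -/
noncomputable def fourthMomentPoint (q : ℕ) [NeZero q] (t : ℝ) : ℝ :=
  (phiStar q : ℝ)⁻¹ * ∑' χ : {χ : DirichletCharacter ℂ q // χ.IsPrimitive},
    ‖DirichletCharacter.LFunction χ.1 (1/2 + I*t)‖ ^ 4

end Paper

namespace Paper

open DirichletCharacter

private lemma factorsThrough_gcd {q : ℕ} [NeZero q] (χ : DirichletCharacter ℂ q) {d e : ℕ}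
    (h1 : χ.FactorsThrough d) (h2 : χ.FactorsThrough e) :
    χ.FactorsThrough (Nat.gcd d e) := by
  have hd : d ∣ q := h1.dvd
  have he : e ∣ q := h2.dvd
  have hg : Nat.gcd d e ∣ q := (Nat.gcd_dvd_left d e).trans hd
  rw [DirichletCharacter.factorsThrough_iff_ker_unitsMap hd] at h1
  rw [DirichletCharacter.factorsThrough_iff_ker_unitsMap he] at h2
  rw [DirichletCharacter.factorsThrough_iff_ker_unitsMap hg]
  intro u hu
  set a : ℕ := (u : ZMod q).val with ha
  have hau : ((a : ℕ) : ZMod q) = (u : ZMod q) := ZMod.natCast_rightInverse _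
  have h1g : a ≡ 1 [MOD Nat.gcd d e] := by
    rw [← ZMod.natCast_eq_natCast_iff]
    have hu' : ZMod.castHom hg (ZMod (Nat.gcd d e)) (u : ZMod q) = 1 := by
      have h := congrArg Units.val (MonoidHom.mem_ker.mp hu)
      simpa [ZMod.unitsMap_def] using h
    rw [← hau] at hu'
    simpa using hu'
  obtain ⟨k, hk1, hk2⟩ := Nat.chineseRemainder' (n := d) (m := e) h1g
  have hcopa : Nat.Coprime a q := ZMod.val_coe_unit_coprime u
  have hkd : Nat.Coprime k d := by
    have hg2 : Nat.gcd k d = Nat.gcd a d := hk1.gcd_eq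
    rw [Nat.Coprime, hg2]
    exact hcopa.coprime_dvd_right hd
  have hke : Nat.Coprime k e := by
    have hg2 : Nat.gcd k e = Nat.gcd 1 e := hk2.gcd_eq
    rw [Nat.Coprime, hg2]
    exact Nat.gcd_one_left e
  have hklcm : Nat.Coprime k (Nat.lcm d e) :=
    Nat.Coprime.coprime_dvd_right (Nat.lcm_dvd_mul d e) (hkd.mul_right hke)
  have hlcm : Nat.lcm d e ∣ q := Nat.lcm_dvd hd he
  obtain ⟨w, hw⟩ := ZMod.unitsMap_surjective hlcm (ZMod.unitOfCoprime k hklcm)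
  have hvw : ∀ (c : ℕ) (hc : c ∣ q) (hcl : c ∣ Nat.lcm d e),
      ((ZMod.unitsMap hc w : (ZMod c)ˣ) : ZMod c) = ((k : ℕ) : ZMod c) := by
    intro c hc hcl
    have h' : ZMod.unitsMap hc w = ZMod.unitsMap hcl (ZMod.unitsMap hlcm w) := by
      rw [← MonoidHom.comp_apply, ZMod.unitsMap_comp]
    rw [h', hw]
    simp [ZMod.unitsMap_def, ZMod.coe_unitOfCoprime]
  have hwd : ZMod.unitsMap hd w = ZMod.unitsMap hd u := by
    apply Units.ext
    rw [hvw d hd (Nat.dvd_lcm_left d e)]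
    have h'' : ((ZMod.unitsMap hd u : (ZMod d)ˣ) : ZMod d) = ((a : ℕ) : ZMod d) := by
      simp [ZMod.unitsMap_def, ← hau]
    rw [h'']
    exact (ZMod.natCast_eq_natCast_iff _ _ _).mpr hk1
  have hwe : ZMod.unitsMap he w = 1 := by
    apply Units.ext
    rw [hvw e he (Nat.dvd_lcm_right d e)]
    have := (ZMod.natCast_eq_natCast_iff k 1 e).mpr hk2
    simpa using this
  have hv : u * w⁻¹ ∈ (ZMod.unitsMap hd).ker := by
    rw [MonoidHom.mem_ker, map_mul, map_inv, hwd]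
    simp
  have hwker : w ∈ (ZMod.unitsMap he).ker := MonoidHom.mem_ker.mpr hwe
  have hχv := h1 hv
  have hχw := h2 hwker
  rw [MonoidHom.mem_ker] at hχv hχw ⊢
  calc χ.toUnitHom u = χ.toUnitHom ((u * w⁻¹) * w) := by rw [inv_mul_cancel_right]
    _ = χ.toUnitHom (u * w⁻¹) * χ.toUnitHom w := map_mul _ _ _
    _ = 1 := by rw [hχv, hχw, one_mul]

private lemma conductor_dvd_of_factorsThrough {q : ℕ} [NeZero q] (χ : DirichletCharacter ℂ q)
    {e : ℕ} (h : χ.FactorsThrough e) : χ.conductor ∣ e := by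
  have hgcd := factorsThrough_gcd χ (factorsThrough_conductor χ) h
  have hle : χ.conductor ≤ Nat.gcd χ.conductor e := Nat.sInf_le hgcd
  have heq : Nat.gcd χ.conductor e = χ.conductor :=
    le_antisymm (Nat.le_of_dvd (Nat.pos_of_ne_zero (conductor_ne_zero χ))
      (Nat.gcd_dvd_left _ _)) hle
  exact heq ▸ Nat.gcd_dvd_right _ _

private lemma factorsThrough_of_conductor_dvd {q : ℕ} (χ : DirichletCharacter ℂ q)
    {d : ℕ} (hd : d ∣ q) (h : χ.conductor ∣ d) : χ.FactorsThrough d := by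
  refine ⟨hd, DirichletCharacter.changeLevel h χ.primitiveCharacter, ?_⟩
  have hχ : χ = DirichletCharacter.changeLevel (conductor_dvd_level χ) χ.primitiveCharacter :=
    Classical.choose_spec (factorsThrough_conductor χ).choose_spec
  rw [← DirichletCharacter.changeLevel_trans]
  exact hχ


private lemma moebius_divisor_sum {t : ℕ} :
    ∑ e ∈ t.divisors, (ArithmeticFunction.moebius e : ℤ) = if t = 1 then 1 else 0 := by
  have h := ArithmeticFunction.coe_mul_zeta_apply
    (f := (ArithmeticFunction.moebius : ArithmeticFunction ℤ)) (x := t)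
  rw [ArithmeticFunction.moebius_mul_coe_zeta] at h
  rw [← h, ArithmeticFunction.one_apply]

private lemma moebius_indicator {q : ℕ} (hq : q ≠ 0) {c : ℕ} (hc : c ∣ q) :
    ∑ d ∈ q.divisors, (if c ∣ d then ((moeb (q / d) : ℤ) : ℂ) else 0)
      = if c = q then 1 else 0 := by
  classical
  obtain ⟨t, rfl⟩ := hc
  have hc0 : c ≠ 0 := fun h => hq (by simp [h])
  have ht : t ≠ 0 := fun h => hq (by simp [h])
  rw [← Finset.sum_filter]
  have himg : (c * t).divisors.filter (fun d => c ∣ d)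
      = t.divisors.image (fun e => c * e) := by
    ext x
    simp only [Finset.mem_filter, Nat.mem_divisors, Finset.mem_image]
    constructor
    · rintro ⟨⟨hx, _⟩, e, rfl⟩
      exact ⟨e, ⟨(Nat.mul_dvd_mul_iff_left (Nat.pos_of_ne_zero hc0)).mp hx, ht⟩, rfl⟩
    · rintro ⟨e, ⟨he, _⟩, rfl⟩
      exact ⟨⟨Nat.mul_dvd_mul_left c he, hq⟩, Dvd.intro e rfl⟩
  rw [himg, Finset.sum_image
    (fun a _ b _ hab => Nat.eq_of_mul_eq_mul_left (Nat.pos_of_ne_zero hc0) hab)]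
  rw [Finset.sum_congr rfl (fun e he => by
    rw [Nat.mul_div_mul_left _ _ (Nat.pos_of_ne_zero hc0)])]
  rw [Nat.sum_div_divisors t (fun e => ((moeb e : ℤ) : ℂ))]
  rw [show ∑ e ∈ t.divisors, ((moeb e : ℤ) : ℂ)
      = ((∑ e ∈ t.divisors, (ArithmeticFunction.moebius e : ℤ) : ℤ) : ℂ) by
    push_cast [moeb]; rfl]
  rw [moebius_divisor_sum]
  have hct : (c = c * t) ↔ t = 1 := by
    constructor
    · intro h
      have h2 : c * 1 = c * t := by rw [mul_one]; exact h
      exact (Nat.eq_of_mul_eq_mul_left (Nat.pos_of_ne_zero hc0) h2).symm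
    · intro h; rw [h, mul_one]
  by_cases h : t = 1 <;> simp [h, hct]

private lemma level_sum {d : ℕ} [NeZero d] (m n : ℤ) (hm : IsUnit ((m : ZMod d)))
    (hn : IsUnit ((n : ZMod d))) :
    ∑ ψ : DirichletCharacter ℂ d, ψ ((m : ZMod d)) * (starRingEnd ℂ) (ψ ((n : ZMod d)))
      = if (d : ℤ) ∣ (m - n) then (d.totient : ℂ) else 0 := by
  have hstep : ∀ ψ : DirichletCharacter ℂ d,
      ψ ((m : ZMod d)) * (starRingEnd ℂ) (ψ ((n : ZMod d)))
        = ψ (((m : ZMod d)) * Ring.inverse ((n : ZMod d))) := by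
    intro ψ
    rw [map_mul, ← MulChar.inv_apply, starRingEnd_apply, MulChar.star_apply']
  simp_rw [hstep]
  rw [DirichletCharacter.sum_characters_eq]
  have hiff : ((m : ZMod d)) * Ring.inverse ((n : ZMod d)) = 1 ↔ (d : ℤ) ∣ m - n := by
    rw [← ZMod.intCast_eq_intCast_iff_dvd_sub n m d]
    constructor
    · intro h1
      have h2 : ((m : ZMod d)) * (Ring.inverse ((n : ZMod d)) * ((n : ZMod d)))
          = 1 * ((n : ZMod d)) := by rw [← mul_assoc, h1]
      rw [Ring.inverse_mul_cancel _ hn, mul_one, one_mul] at h2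
      exact h2.symm
    · intro h1
      rw [← h1, Ring.mul_inverse_cancel _ (h1 ▸ hn)]
  by_cases h : (d : ℤ) ∣ m - n <;> simp [hiff, h]


private lemma filter_conductor_dvd_eq {q : ℕ} [NeZero q] {d : ℕ} (hd : d ∣ q)
    [DecidablePred fun χ : DirichletCharacter ℂ q => χ.conductor ∣ d]
    [DecidableEq (DirichletCharacter ℂ q)] :
    Finset.univ.filter (fun χ : DirichletCharacter ℂ q => χ.conductor ∣ d)
      = Finset.univ.image (DirichletCharacter.changeLevel (R := ℂ) hd) := by
  ext χ
  simp only [Finset.mem_filter, Finset.mem_univ, true_and, Finset.mem_image]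
  constructor
  · intro hχ
    obtain ⟨hdq, ψ, hψ⟩ := factorsThrough_of_conductor_dvd χ hd hχ
    exact ⟨ψ, hψ.symm⟩
  · rintro ⟨ψ, _, rfl⟩
    exact conductor_dvd_of_factorsThrough _ (changeLevel_factorsThrough _ hd)


/-- the orthogonality formula for primitive characters. -/
theorem statement11 (q : ℕ) (hq : 0 < q) (m n : ℤ) (h : Int.gcd (m * n) q = 1) :
    ∑' χ : {χ : DirichletCharacter ℂ q // χ.IsPrimitive},
        χ.1 (m : ZMod q) * (starRingEnd ℂ) (χ.1 (n : ZMod q))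
      = ∑ d ∈ q.divisors,
          if (d : ℤ) ∣ (m - n) then (d.totient : ℂ) * (moeb (q/d) : ℂ) else 0 := by
  classical
  haveI : NeZero q := ⟨hq.ne'⟩
  -- unit facts
  have hna : Nat.Coprime (m * n).natAbs q := by
    simpa [Int.gcd] using h
  have h1 : IsUnit ((((m * n).natAbs : ℕ)) : ZMod q) := (ZMod.isUnit_iff_coprime _ q).mpr hna
  have h2 : IsUnit (((m * n : ℤ)) : ZMod q) := by
    rcases Int.natAbs_eq (m * n) with he | he
    · rw [he, Int.cast_natCast]; exact h1
    · rw [he, Int.cast_neg, Int.cast_natCast]; exact h1.neg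
  have h2' : IsUnit ((m : ZMod q) * (n : ZMod q)) := by push_cast at h2; exact h2
  have hmq : IsUnit ((m : ZMod q)) := isUnit_of_mul_isUnit_left h2'
  have hnq : IsUnit ((n : ZMod q)) := isUnit_of_mul_isUnit_right h2'
  set f : DirichletCharacter ℂ q → ℂ :=
    fun χ => χ (m : ZMod q) * (starRingEnd ℂ) (χ (n : ZMod q)) with hf
  rw [tsum_fintype]
  rw [← Finset.sum_subtype (Finset.univ.filter fun χ : DirichletCharacter ℂ q => χ.IsPrimitive)
    (fun χ => by simp) f]
  calc ∑ χ ∈ Finset.univ.filter (fun χ : DirichletCharacter ℂ q => χ.IsPrimitive), f χ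
      = ∑ χ : DirichletCharacter ℂ q, (if χ.conductor = q then (1 : ℂ) else 0) * f χ := by
        rw [Finset.sum_filter]
        exact Finset.sum_congr rfl fun χ _ => by
          by_cases hχ : χ.conductor = q <;>
            simp [DirichletCharacter.isPrimitive_def, hχ]
    _ = ∑ χ : DirichletCharacter ℂ q,
          (∑ d ∈ q.divisors, if χ.conductor ∣ d then ((moeb (q / d) : ℤ) : ℂ) else 0) * f χ := by
        refine Finset.sum_congr rfl fun χ _ => ?_
        rw [moebius_indicator (NeZero.ne q) (conductor_dvd_level χ)]
    _ = ∑ d ∈ q.divisors, ∑ χ : DirichletCharacter ℂ q,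
          (if χ.conductor ∣ d then ((moeb (q / d) : ℤ) : ℂ) else 0) * f χ := by
        simp_rw [Finset.sum_mul]
        rw [Finset.sum_comm]
    _ = ∑ d ∈ q.divisors, ((moeb (q / d) : ℤ) : ℂ) *
          ∑ χ ∈ Finset.univ.filter (fun χ : DirichletCharacter ℂ q => χ.conductor ∣ d), f χ := by
        refine Finset.sum_congr rfl fun d _ => ?_
        rw [Finset.mul_sum, Finset.sum_filter]
        exact Finset.sum_congr rfl fun χ _ => by
          by_cases hχ : χ.conductor ∣ d <;> simp [hχ]
    _ = ∑ d ∈ q.divisors, ((moeb (q / d) : ℤ) : ℂ) *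
          (if (d : ℤ) ∣ (m - n) then (d.totient : ℂ) else 0) := by
        refine Finset.sum_congr rfl fun d hd => ?_
        have hdq : d ∣ q := (Nat.mem_divisors.mp hd).1
        haveI : NeZero d := ⟨(Nat.pos_of_mem_divisors hd).ne'⟩
        congr 1
        have hmd : IsUnit ((m : ZMod d)) := by
          have : ((m : ℤ) : ZMod d) = ZMod.castHom hdq (ZMod d) ((m : ZMod q)) :=
            (map_intCast _ m).symm
          rw [this]; exact hmq.map _
        have hnd : IsUnit ((n : ZMod d)) := by
          have : ((n : ℤ) : ZMod d) = ZMod.castHom hdq (ZMod d) ((n : ZMod q)) :=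
            (map_intCast _ n).symm
          rw [this]; exact hnq.map _
        rw [filter_conductor_dvd_eq hdq, Finset.sum_image
          (fun a _ b _ hab => DirichletCharacter.changeLevel_injective hdq hab)]
        rw [← level_sum m n hmd hnd]
        refine Finset.sum_congr rfl fun ψ _ => ?_
        have key : ∀ (a : ℤ), IsUnit ((a : ZMod q)) →
            (DirichletCharacter.changeLevel hdq ψ) ((a : ZMod q)) = ψ ((a : ZMod d)) := by
          intro a ha
          have hs : ((a : ZMod q)) = (ha.unit : ZMod q) := ha.unit_spec.symm
          rw [hs, DirichletCharacter.changeLevel_eq_cast_of_dvd ψ hdq ha.unit]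
          congr 1
          rw [ha.unit_spec]
          exact (ZMod.castHom_apply _).symm.trans (map_intCast (ZMod.castHom hdq (ZMod d)) a)
        rw [hf]
        simp only [key m hmq, key n hnq]
    _ = ∑ d ∈ q.divisors,
          if (d : ℤ) ∣ (m - n) then (d.totient : ℂ) * (moeb (q/d) : ℂ) else 0 := by
        refine Finset.sum_congr rfl fun d _ => ?_
        by_cases hd : (d : ℤ) ∣ (m - n) <;> simp [hd, mul_comm]

end Paper
end
end

section
/- Let q be a positive integer, 𝔞 ∈ {0,1}, and let m, n be integers with gcd(mn, q) = 1. Then the sum of χ(m)χ̄(n) over primitive Dirichlet characters χ modulo q with χ(−1) = (−1)^𝔞 equals (1/2) Σ_{d | q, d | m−n} φ(d) μ(q/d) + ((−1)^𝔞/2) Σ_{d | q, d | m+n} φ(d) μ(q/d), where the sums run over positive divisors d of q which also divide m−n (respectively m+n), φ is Euler's totient function and μ is the Möbius function. -/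
open Complex Finset
open scoped Real

noncomputable section

section AuxStatement12
open Finset DirichletCharacter

lemma int_crt' (e c a b : ℤ) (h : (Int.gcd e c : ℤ) ∣ a - b) :
    ∃ x : ℤ, e ∣ x - a ∧ c ∣ x - b := by
  obtain ⟨k, hk⟩ := h
  have hg := Int.gcd_eq_gcd_ab e c
  refine ⟨a - e * Int.gcdA e c * k, ⟨-(Int.gcdA e c * k), by ring⟩,
    ⟨Int.gcdB e c * k, ?_⟩⟩
  have h2 : a - b = (e * Int.gcdA e c + c * Int.gcdB e c) * k := by rw [← hg]; exact hk
  linear_combination h2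

lemma ker_decomp {q : ℕ} [NeZero q] {e c : ℕ} (he : e ∣ q) (hc : c ∣ q)
    (u : (ZMod q)ˣ) (hu : ZMod.unitsMap (dvd_trans (Nat.gcd_dvd_left e c) he) u = 1) :
    ∃ v : (ZMod q)ˣ, ZMod.unitsMap he v = 1 ∧ ZMod.unitsMap hc v = ZMod.unitsMap hc u := by
  set g := Nat.gcd e c with hg
  set U : ℤ := ((u : ZMod q).val : ℤ) with hU
  have hUu : ((U : ZMod q)) = (u : ZMod q) := by
    simp [hU, ZMod.natCast_val, ZMod.cast_id]
  -- g ∣ 1 - U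
  have hgd : (g : ℤ) ∣ 1 - U := by
    have h1 : ((U : ZMod g)) = 1 := by
      have h0 := congrArg (fun z => ((z : (ZMod g)ˣ) : ZMod g)) hu
      simp only [ZMod.unitsMap_def, Units.coe_map, Units.val_one, MonoidHom.coe_coe] at h0
      rw [← hUu, map_intCast] at h0
      exact h0
    have h2 : ((1 - U : ℤ) : ZMod g) = 0 := by push_cast [h1]; ring
    exact (ZMod.intCast_zmod_eq_zero_iff_dvd _ _).mp h2
  obtain ⟨x, hxe, hxc⟩ := int_crt' (e : ℤ) (c : ℤ) 1 U (by rwa [Int.gcd_natCast_natCast])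
  obtain ⟨t, ht⟩ := id hxe
  have h1 : IsCoprime x (e : ℤ) := ⟨1, -t, by linear_combination ht⟩
  set A : ℤ := (((u⁻¹ : (ZMod q)ˣ) : ZMod q).val : ℤ) with hA
  have hAU : (q : ℤ) ∣ A * U - 1 := by
    have h3 : ((A * U - 1 : ℤ) : ZMod q) = 0 := by
      push_cast [hA, hU]
      rw [ZMod.natCast_val, ZMod.natCast_val, ZMod.cast_id, ZMod.cast_id]
      simp
    exact (ZMod.intCast_zmod_eq_zero_iff_dvd _ _).mp h3
  obtain ⟨s, hs⟩ := dvd_trans (Int.natCast_dvd_natCast.mpr hc) hAU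
  obtain ⟨r, hr⟩ := id hxc
  have h2 : IsCoprime x (c : ℤ) := ⟨A, -(s + A * r), by linear_combination A * hr + hs⟩
  set L := Nat.lcm e c with hL
  have hLq : L ∣ q := Nat.lcm_dvd he hc
  have hcop : IsCoprime x (L : ℤ) := (h1.mul_right h2).of_isCoprime_of_dvd_right
    (Int.natCast_dvd_natCast.mpr (Nat.lcm_dvd_mul e c))
  have hxunit : IsUnit ((x : ZMod L)) := by
    obtain ⟨a, b, hab⟩ := hcop
    refine IsUnit.of_mul_eq_one ((a : ZMod L)) ?_
    have h5 : ((a * x + b * L : ℤ) : ZMod L) = 1 := by rw [hab]; norm_cast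
    push_cast at h5
    rw [ZMod.natCast_self, mul_zero, add_zero] at h5
    rw [mul_comm]; exact h5
  obtain ⟨v, hv⟩ := ZMod.unitsMap_surjective hLq hxunit.unit
  have key : ∀ (d : ℕ) (hd : d ∣ q), d ∣ L →
      ((ZMod.unitsMap hd v : ZMod d)) = ((x : ZMod d)) := by
    intro d hd hdL
    have h3 : ZMod.unitsMap hd v = ZMod.unitsMap hdL (hxunit.unit) := by
      rw [← hv, ← MonoidHom.comp_apply, ZMod.unitsMap_comp]
    rw [h3]
    simp only [ZMod.unitsMap_def, Units.coe_map, IsUnit.unit_spec]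
    exact map_intCast (ZMod.castHom hdL (ZMod d)) x
  refine ⟨v, ?_, ?_⟩
  · apply Units.ext
    rw [key e he (Nat.dvd_lcm_left e c), Units.val_one]
    have h6 : ((x - 1 : ℤ) : ZMod e) = 0 :=
      (ZMod.intCast_zmod_eq_zero_iff_dvd _ _).mpr hxe
    push_cast at h6
    linear_combination h6
  · apply Units.ext
    rw [key c hc (Nat.dvd_lcm_right e c)]
    have h4 : ((x - U : ℤ) : ZMod c) = 0 :=
      (ZMod.intCast_zmod_eq_zero_iff_dvd _ _).mpr hxc
    push_cast at h4
    simp only [ZMod.unitsMap_def, Units.coe_map, MonoidHom.coe_coe]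
    rw [← hUu, map_intCast]
    linear_combination h4

lemma factorsThrough_gcd {q : ℕ} [NeZero q] (χ : DirichletCharacter ℂ q) {e c : ℕ}
    (hE : FactorsThrough χ e) (hC : FactorsThrough χ c) :
    FactorsThrough χ (Nat.gcd e c) := by
  have he := hE.dvd
  have hc := hC.dvd
  rw [factorsThrough_iff_ker_unitsMap (dvd_trans (Nat.gcd_dvd_left e c) he)]
  rw [factorsThrough_iff_ker_unitsMap he] at hE
  rw [factorsThrough_iff_ker_unitsMap hc] at hC
  intro u hu
  obtain ⟨v, hv1, hv2⟩ := ker_decomp he hc u hu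
  have hv : v ∈ (ZMod.unitsMap he).ker := hv1
  have hw : v⁻¹ * u ∈ (ZMod.unitsMap hc).ker := by
    rw [MonoidHom.mem_ker, map_mul, map_inv, hv2, inv_mul_cancel]
  have := mul_mem (hE hv) (hC hw)
  simpa using this

lemma factorsThrough_iff_conductor_dvd {q : ℕ} [NeZero q] (χ : DirichletCharacter ℂ q)
    {e : ℕ} (he : e ∣ q) : FactorsThrough χ e ↔ χ.conductor ∣ e := by
  constructor
  · intro h
    have hg : FactorsThrough χ (Nat.gcd e χ.conductor) :=
      factorsThrough_gcd χ h (factorsThrough_conductor χ)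
    have h1 : χ.conductor ≤ Nat.gcd e χ.conductor := Nat.sInf_le hg
    have hpos : 0 < χ.conductor := Nat.pos_of_ne_zero (conductor_ne_zero χ)
    have h2 : Nat.gcd e χ.conductor = χ.conductor :=
      Nat.le_antisymm (Nat.le_of_dvd hpos (Nat.gcd_dvd_right _ _)) h1
    rw [← h2]
    exact Nat.gcd_dvd_left _ _
  · intro h
    refine ⟨he, changeLevel h (factorsThrough_conductor χ).χ₀, ?_⟩
    rw [← changeLevel_trans _ h he]
    exact (factorsThrough_conductor χ).eq_changeLevel

open scoped Classical in
lemma sum_factorsThrough {q : ℕ} [NeZero q] {d : ℕ} (hd : d ∣ q) (u : (ZMod q)ˣ) :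
    (∑ χ : DirichletCharacter ℂ q, if FactorsThrough χ d then χ ((u : ZMod q)) else 0)
      = ∑ χ₀ : DirichletCharacter ℂ d, χ₀ ((ZMod.unitsMap hd u : ZMod d)) := by
  classical
  rw [← Finset.sum_filter]
  refine (Finset.sum_bij (fun χ₀ _ => changeLevel hd χ₀) ?_ ?_ ?_ ?_).symm
  · intro χ₀ _
    simp only [Finset.mem_filter, Finset.mem_univ, true_and]
    exact changeLevel_factorsThrough χ₀ hd
  · intro a _ b _ h
    exact changeLevel_injective hd h
  · intro χ hχ
    simp only [Finset.mem_filter, Finset.mem_univ, true_and] at hχ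
    exact ⟨hχ.χ₀, Finset.mem_univ _, hχ.eq_changeLevel.symm⟩
  · intro χ₀ _
    rw [changeLevel_eq_cast_of_dvd χ₀ hd u]
    simp [ZMod.unitsMap_def]

lemma moebius_inner {q : ℕ} (hq : q ≠ 0) {c : ℕ} (hc : c ∣ q) :
    (∑ d ∈ q.divisors, if c ∣ d then (ArithmeticFunction.moebius (q/d) : ℤ) else 0)
      = if c = q then 1 else 0 := by
  classical
  have hc0 : c ≠ 0 := fun h => hq (Nat.eq_zero_of_zero_dvd (h ▸ hc))
  have hN : q / c ≠ 0 := Nat.div_ne_zero_iff.mpr ⟨hc0, Nat.le_of_dvd (Nat.pos_of_ne_zero hq) hc⟩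
  rw [← Finset.sum_filter]
  have step : (∑ d ∈ q.divisors.filter (fun d => c ∣ d),
      (ArithmeticFunction.moebius (q/d) : ℤ))
      = ∑ e ∈ (q/c).divisors, (ArithmeticFunction.moebius ((q/c)/e) : ℤ) := by
    refine (Finset.sum_bij (fun e _ => c * e) ?_ ?_ ?_ ?_).symm
    · intro e he
      simp only [Nat.mem_divisors] at he
      simp only [Finset.mem_filter, Nat.mem_divisors]
      refine ⟨⟨?_, hq⟩, Dvd.intro e rfl⟩
      calc c * e ∣ c * (q / c) := mul_dvd_mul_left c he.1
        _ = q := Nat.mul_div_cancel' hc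
    · intro a _ b _ h
      exact Nat.eq_of_mul_eq_mul_left (Nat.pos_of_ne_zero hc0) h
    · intro d hd
      simp only [Finset.mem_filter, Nat.mem_divisors] at hd
      obtain ⟨⟨hdq, _⟩, e, rfl⟩ := hd
      refine ⟨e, ?_, rfl⟩
      simp only [Nat.mem_divisors]
      exact ⟨(Nat.dvd_div_iff_mul_dvd hc).mpr hdq, hN⟩
    · intro e he
      rw [Nat.div_div_eq_div_mul]
  rw [step, Nat.sum_div_divisors (q/c) (fun e => (ArithmeticFunction.moebius e : ℤ)),
    ← ArithmeticFunction.coe_mul_zeta_apply, ArithmeticFunction.moebius_mul_coe_zeta,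
    ArithmeticFunction.one_apply]
  have hiff : q / c = 1 ↔ c = q := by
    constructor
    · intro h
      have := Nat.mul_div_cancel' hc
      rw [h, mul_one] at this
      exact this
    · intro h
      subst h
      exact Nat.div_self (Nat.pos_of_ne_zero hq)
  simp [hiff]

open scoped Classical in
lemma sum_primitive_eq {q : ℕ} [NeZero q] (u : (ZMod q)ˣ) :
    (∑ χ : DirichletCharacter ℂ q, if χ.IsPrimitive then χ ((u : ZMod q)) else 0)
      = ∑ d ∈ q.divisors, ((ArithmeticFunction.moebius (q/d) : ℤ) : ℂ) *
          (if (ZMod.cast ((u : ZMod q)) : ZMod d) = 1 then (d.totient : ℂ) else 0) := by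
  classical
  have hT : ∀ d ∈ q.divisors, (if (ZMod.cast ((u : ZMod q)) : ZMod d) = 1
        then (d.totient : ℂ) else 0)
      = ∑ χ : DirichletCharacter ℂ q, if FactorsThrough χ d then χ ((u : ZMod q)) else 0 := by
    intro d hd
    obtain ⟨hdq, -⟩ := Nat.mem_divisors.mp hd
    haveI : NeZero d := ⟨fun h => NeZero.ne q (Nat.eq_zero_of_zero_dvd (h ▸ hdq))⟩
    have hcast : ((ZMod.unitsMap hdq u : ZMod d)) = (ZMod.cast ((u : ZMod q)) : ZMod d) := by
      simp [ZMod.unitsMap_def]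
    rw [sum_factorsThrough hdq u, DirichletCharacter.sum_characters_eq, hcast]
  have main : ∀ χ : DirichletCharacter ℂ q,
      (∑ d ∈ q.divisors, if FactorsThrough χ d
          then ((ArithmeticFunction.moebius (q/d) : ℤ) : ℂ) else 0)
        = if χ.IsPrimitive then 1 else 0 := by
    intro χ
    have h1 : ∀ d ∈ q.divisors, (if FactorsThrough χ d
          then ((ArithmeticFunction.moebius (q/d) : ℤ) : ℂ) else 0)
        = if χ.conductor ∣ d then ((ArithmeticFunction.moebius (q/d) : ℤ) : ℂ) else 0 :=
      fun d hd =>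
        if_congr (factorsThrough_iff_conductor_dvd χ (Nat.mem_divisors.mp hd).1) rfl rfl
    rw [Finset.sum_congr rfl h1]
    have h2 := moebius_inner (NeZero.ne q) (conductor_dvd_level χ)
    have h3 := congrArg (fun z : ℤ => (z : ℂ)) h2
    push_cast [apply_ite (fun z : ℤ => (z : ℂ))] at h3
    rw [h3]
    have : χ.conductor = q ↔ χ.IsPrimitive := (isPrimitive_def χ).symm
    simp only [this]
  symm
  calc ∑ d ∈ q.divisors, ((ArithmeticFunction.moebius (q/d) : ℤ) : ℂ) *
          (if (ZMod.cast ((u : ZMod q)) : ZMod d) = 1 then (d.totient : ℂ) else 0)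
      = ∑ d ∈ q.divisors, ∑ χ : DirichletCharacter ℂ q,
          (if FactorsThrough χ d then ((ArithmeticFunction.moebius (q/d) : ℤ) : ℂ)
            * χ ((u : ZMod q)) else 0) := by
        refine Finset.sum_congr rfl fun d hd => ?_
        rw [hT d hd, Finset.mul_sum]
        exact Finset.sum_congr rfl fun χ _ => by rw [mul_ite, mul_zero]
    _ = ∑ χ : DirichletCharacter ℂ q, ∑ d ∈ q.divisors,
          (if FactorsThrough χ d then ((ArithmeticFunction.moebius (q/d) : ℤ) : ℂ)
            * χ ((u : ZMod q)) else 0) := Finset.sum_comm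
    _ = ∑ χ : DirichletCharacter ℂ q,
          (∑ d ∈ q.divisors, if FactorsThrough χ d
            then ((ArithmeticFunction.moebius (q/d) : ℤ) : ℂ) else 0) * χ ((u : ZMod q)) := by
        refine Finset.sum_congr rfl fun χ _ => ?_
        rw [Finset.sum_mul]
        exact Finset.sum_congr rfl fun d _ => by rw [ite_mul, zero_mul]
    _ = ∑ χ : DirichletCharacter ℂ q,
          (if χ.IsPrimitive then 1 else 0) * χ ((u : ZMod q)) := by
        exact Finset.sum_congr rfl fun χ _ => by rw [main χ]
    _ = ∑ χ : DirichletCharacter ℂ q, (if χ.IsPrimitive then χ ((u : ZMod q)) else 0) := by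
        exact Finset.sum_congr rfl fun χ _ => by rw [ite_mul, zero_mul, one_mul]

lemma conj_char_eq {q : ℕ} (χ : DirichletCharacter ℂ q) {z w : ZMod q} (hz : IsUnit z)
    (hzw : z * w = 1) : (starRingEnd ℂ) (χ z) = χ w := by
  have h1 : ‖χ z‖ = 1 := by
    have := χ.unit_norm_eq_one hz.unit
    rwa [hz.unit_spec] at this
  have h2 : (starRingEnd ℂ) (χ z) * χ z = 1 := by
    rw [mul_comm, Complex.mul_conj']
    norm_cast
    simp [h1]
  calc (starRingEnd ℂ) (χ z) = (starRingEnd ℂ) (χ z) * (χ z * χ w) := by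
        rw [← map_mul, hzw, map_one, mul_one]
    _ = ((starRingEnd ℂ) (χ z) * χ z) * χ w := by ring
    _ = χ w := by rw [h2, one_mul]

lemma cond_iff_sub (d : ℕ) (m n n' : ℤ) (hd : (d:ℤ) ∣ n * n' - 1) :
    (d:ℤ) ∣ m * n' - 1 ↔ (d:ℤ) ∣ m - n := by
  constructor
  · intro h
    have h2 : (d:ℤ) ∣ (m * n' - 1) * n - m * (n * n' - 1) := (h.mul_right n).sub (hd.mul_left m)
    have h3 : (m * n' - 1) * n - m * (n * n' - 1) = m - n := by ring
    rwa [h3] at h2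
  · intro h
    have h2 : (d:ℤ) ∣ (m - n) * n' + (n * n' - 1) := (h.mul_right n').add hd
    have h3 : (m - n) * n' + (n * n' - 1) = m * n' - 1 := by ring
    rwa [h3] at h2

lemma cond_iff_add (d : ℕ) (m n n' : ℤ) (hd : (d:ℤ) ∣ n * n' - 1) :
    (d:ℤ) ∣ -(m * n') - 1 ↔ (d:ℤ) ∣ m + n := by
  constructor
  · intro h
    have h2 : (d:ℤ) ∣ (-(m * n') - 1) * n + m * (n * n' - 1) :=
      (h.mul_right n).add (hd.mul_left m)
    have h3 : (-(m * n') - 1) * n + m * (n * n' - 1) = -(m + n) := by ring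
    rw [h3] at h2
    exact dvd_neg.mp h2
  · intro h
    have h2 : (d:ℤ) ∣ (m + n) * n' - (n * n' - 1) := (h.mul_right n').sub hd
    have h3 : (m + n) * n' - (n * n' - 1) = -(-(m * n') - 1) := by ring
    rw [h3] at h2
    exact dvd_neg.mp h2

end AuxStatement12

namespace Paper

/-- the orthogonality formula for primitive characters of fixed parity. -/
theorem statement12 (q : ℕ) (hq : 0 < q) (a : ℕ) (ha : a = 0 ∨ a = 1)
    (m n : ℤ) (h : Int.gcd (m * n) q = 1) :
    ∑' χ : {χ : DirichletCharacter ℂ q // χ.IsPrimitive ∧ χ (-1) = (-1) ^ a},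
        χ.1 (m : ZMod q) * (starRingEnd ℂ) (χ.1 (n : ZMod q))
      = 2⁻¹ * (∑ d ∈ q.divisors,
            if (d : ℤ) ∣ (m - n) then (d.totient : ℂ) * (moeb (q/d) : ℂ) else 0)
        + (-1 : ℂ) ^ a / 2 * (∑ d ∈ q.divisors,
            if (d : ℤ) ∣ (m + n) then (d.totient : ℂ) * (moeb (q/d) : ℂ) else 0) := by
  classical
  haveI : NeZero q := ⟨hq.ne'⟩
  have hco : IsCoprime (m * n : ℤ) (q : ℤ) := Int.isCoprime_iff_gcd_eq_one.mpr h
  have hcm : IsCoprime (m : ℤ) (q : ℤ) := hco.of_mul_left_left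
  have hcn : IsCoprime (n : ℤ) (q : ℤ) := hco.of_mul_left_right
  obtain ⟨n', b, hb⟩ := hcn
  have hnn' : ((n : ZMod q)) * ((n' : ℤ) : ZMod q) = 1 := by
    have h0 := congrArg (fun z : ℤ => (z : ZMod q)) hb
    push_cast at h0
    rw [ZMod.natCast_self] at h0
    linear_combination h0
  have hZnn : (q : ℤ) ∣ n * n' - 1 := by
    refine ⟨-b, ?_⟩
    linear_combination hb
  have hun : IsUnit ((n : ℤ) : ZMod q) := IsUnit.of_mul_eq_one _ hnn'
  have hun' : IsUnit ((n' : ℤ) : ZMod q) :=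
    IsUnit.of_mul_eq_one _ (by rw [mul_comm] at hnn'; exact hnn')
  have hum : IsUnit ((m : ℤ) : ZMod q) := by
    obtain ⟨c', d', hcd⟩ := hcm
    have h0 := congrArg (fun z : ℤ => (z : ZMod q)) hcd
    push_cast at h0
    rw [ZMod.natCast_self] at h0
    refine IsUnit.of_mul_eq_one ((c' : ZMod q)) ?_
    rw [mul_comm]
    linear_combination h0
  have hX : IsUnit (((m * n' : ℤ)) : ZMod q) := by
    push_cast
    exact hum.mul hun'
  have hX2 : IsUnit (((-(m * n') : ℤ)) : ZMod q) := by
    push_cast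
    push_cast at hX
    exact hX.neg
  set u₁ : (ZMod q)ˣ := hX.unit with hu₁
  set u₂ : (ZMod q)ˣ := hX2.unit with hu₂
  haveI : Fintype {χ : DirichletCharacter ℂ q // χ.IsPrimitive ∧ χ (-1) = (-1) ^ a} :=
    Fintype.ofFinite _
  rw [tsum_fintype]
  rw [← Finset.sum_subtype
    (Finset.univ.filter (fun χ : DirichletCharacter ℂ q => χ.IsPrimitive ∧ χ (-1) = (-1) ^ a))
    (by simp) (fun χ => χ ((m : ZMod q)) * (starRingEnd ℂ) (χ ((n : ZMod q))))]
  rw [Finset.sum_filter]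
  have key : ∀ χ : DirichletCharacter ℂ q,
      (if χ.IsPrimitive ∧ χ (-1) = (-1) ^ a
        then χ ((m : ZMod q)) * (starRingEnd ℂ) (χ ((n : ZMod q))) else 0)
      = 2⁻¹ * (if χ.IsPrimitive then χ ((u₁ : ZMod q)) else 0)
        + (-1 : ℂ) ^ a / 2 * (if χ.IsPrimitive then χ ((u₂ : ZMod q)) else 0) := by
    intro χ
    have hconj : (starRingEnd ℂ) (χ ((n : ZMod q))) = χ (((n' : ℤ) : ZMod q)) :=
      conj_char_eq χ hun hnn'
    have hval1 : χ ((m : ZMod q)) * χ (((n' : ℤ) : ZMod q)) = χ ((u₁ : ZMod q)) := by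
      rw [← map_mul]
      congr 1
      rw [hu₁, IsUnit.unit_spec]
      push_cast
      ring
    have hval2 : χ ((u₂ : ZMod q)) = χ (-1) * χ ((u₁ : ZMod q)) := by
      rw [← map_mul]
      congr 1
      rw [hu₁, hu₂, IsUnit.unit_spec, IsUnit.unit_spec]
      push_cast
      ring
    have hpm : χ (-1) = 1 ∨ χ (-1) = -1 := by
      refine mul_self_eq_one_iff.mp ?_
      rw [← map_mul]
      norm_num
    by_cases hP : χ.IsPrimitive
    · simp only [hP, true_and, if_true]
      rw [hconj, hval1]
      have hne : (-1 : ℂ) ≠ 1 := by norm_num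
      rcases ha with rfl | rfl <;> rcases hpm with hpar | hpar <;>
        rw [hval2, hpar] <;> simp only [hpar, pow_zero, pow_one, if_true, if_pos rfl,
          if_neg hne, if_neg hne.symm] <;> ring
    · simp [hP]
  rw [Finset.sum_congr rfl (fun χ _ => key χ), Finset.sum_add_distrib,
    ← Finset.mul_sum, ← Finset.mul_sum, sum_primitive_eq u₁, sum_primitive_eq u₂]
  congr 1
  · congr 1
    refine Finset.sum_congr rfl fun d hd => ?_
    obtain ⟨hdq, -⟩ := Nat.mem_divisors.mp hd
    have hdnn : (d : ℤ) ∣ n * n' - 1 :=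
      dvd_trans (Int.natCast_dvd_natCast.mpr hdq) hZnn
    have hcast : (ZMod.cast ((u₁ : ZMod q)) : ZMod d) = ((m * n' : ℤ) : ZMod d) := by
      rw [hu₁, IsUnit.unit_spec]
      exact ZMod.cast_intCast hdq _
    rw [hcast]
    have hcond : (((m * n' : ℤ) : ZMod d) = 1) ↔ (d : ℤ) ∣ (m - n) := by
      rw [show (1 : ZMod d) = ((1 : ℤ) : ZMod d) by norm_num,
        ZMod.intCast_eq_intCast_iff, Int.modEq_iff_dvd, dvd_sub_comm]
      exact cond_iff_sub d m n n' hdnn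
    rw [if_congr hcond rfl rfl]
    simp only [moeb]
    split_ifs <;> ring
  · congr 1
    refine Finset.sum_congr rfl fun d hd => ?_
    obtain ⟨hdq, -⟩ := Nat.mem_divisors.mp hd
    have hdnn : (d : ℤ) ∣ n * n' - 1 :=
      dvd_trans (Int.natCast_dvd_natCast.mpr hdq) hZnn
    have hcast : (ZMod.cast ((u₂ : ZMod q)) : ZMod d) = ((-(m * n') : ℤ) : ZMod d) := by
      rw [hu₂, IsUnit.unit_spec]
      exact ZMod.cast_intCast hdq _
    rw [hcast]
    have hcond : (((-(m * n') : ℤ) : ZMod d) = 1) ↔ (d : ℤ) ∣ (m + n) := by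
      rw [show (1 : ZMod d) = ((1 : ℤ) : ZMod d) by norm_num,
        ZMod.intCast_eq_intCast_iff, Int.modEq_iff_dvd, dvd_sub_comm]
      exact cond_iff_add d m n n' hdnn
    rw [if_congr hcond rfl rfl]
    simp only [moeb]
    split_ifs <;> ring

end Paper
end
end
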